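/- Let k be a commutative ring and H a cocommutative Hopf algebra over k with antipode S, multiplication m and comultiplication Δ. Let Φ : H ⊗ H → H ⊗ H be the k-linear map determined (in Sweedler notation) by Φ(x ⊗ y) = Σ x_{(1)} ⊗ x_{(2)}·y·S(x_{(3)}), i.e. Φ is the composite (id_H ⊗ m) ∘ (id_H ⊗ m ⊗ id_H) ∘ (id_H ⊗ id_H ⊗ id_H ⊗ S) ∘ (id_H ⊗ id_H ⊗ swap) ∘ (Δ ⊗ id_H ⊗ id_H) ∘ (Δ ⊗ id_H). If Φ = id_{H⊗H}, then H is commutative: x·y = y·x for all x, y ∈ H. -/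

import Mathlib

/-! With `x ▷ y = ∑ x₁ y S(x₂)` the adjoint action, `Φ(x ⊗ y) = ∑ x₁ ⊗ (x₂ ▷ y)`, so applying
`ε ⊗ id` to `Φ = id` shows that the adjoint action is trivial: `x ▷ y = ε(x) y`. In any Hopf
algebra, coassociativity and the antipode axiom give
`x y = ∑ x₁ y ε(x₂) = ∑ x₁ y S(x₂) x₃ = ∑ (x₁ ▷ y) x₂`,
which for the trivial action equals `∑ ε(x₁) y x₂ = y x`. -/

open TensorProduct

noncomputable section

universe u

variable (R : Type u) [CommRing R] (H : Type u) [Ring H] [HopfAlgebra R H]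

/-- The `k`-linear map `Φ : H ⊗ H → H ⊗ H`, `Φ(x ⊗ y) = Σ x₍₁₎ ⊗ x₍₂₎ · y · S(x₍₃₎)`,
given as the composite
`(id ⊗ m) ∘ (id ⊗ m ⊗ id) ∘ (id ⊗ id ⊗ id ⊗ S) ∘ (id ⊗ id ⊗ swap) ∘ (Δ ⊗ id ⊗ id) ∘ (Δ ⊗ id)`
(with the appropriate associators inserted). -/
def conjPhi : H ⊗[R] H →ₗ[R] H ⊗[R] H :=
  -- (id ⊗ m) : H ⊗ (H ⊗ H) → H ⊗ H
  (LinearMap.lTensor H (LinearMap.mul' R H))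
    -- (id ⊗ m ⊗ id) : H ⊗ ((H ⊗ H) ⊗ H) → H ⊗ (H ⊗ H)
    ∘ₗ (LinearMap.lTensor H (LinearMap.rTensor H (LinearMap.mul' R H)))
    -- reassociate H ⊗ (H ⊗ (H ⊗ H)) → H ⊗ ((H ⊗ H) ⊗ H)
    ∘ₗ (LinearMap.lTensor H (TensorProduct.assoc R H H H).symm.toLinearMap)
    -- reassociate (H ⊗ H) ⊗ (H ⊗ H) → H ⊗ (H ⊗ (H ⊗ H))
    ∘ₗ (TensorProduct.assoc R H H (H ⊗[R] H)).toLinearMap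
    -- (id ⊗ id ⊗ id ⊗ S) : (H ⊗ H) ⊗ (H ⊗ H) → (H ⊗ H) ⊗ (H ⊗ H)
    ∘ₗ (LinearMap.lTensor (H ⊗[R] H) (LinearMap.lTensor H (HopfAlgebra.antipode (R := R))))
    -- (id ⊗ id ⊗ swap) : (H ⊗ H) ⊗ (H ⊗ H) → (H ⊗ H) ⊗ (H ⊗ H)
    ∘ₗ (LinearMap.lTensor (H ⊗[R] H) (TensorProduct.comm R H H).toLinearMap)
    -- reassociate ((H ⊗ H) ⊗ H) ⊗ H → (H ⊗ H) ⊗ (H ⊗ H)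
    ∘ₗ (TensorProduct.assoc R (H ⊗[R] H) H H).toLinearMap
    -- (Δ ⊗ id ⊗ id) : (H ⊗ H) ⊗ H → ((H ⊗ H) ⊗ H) ⊗ H
    ∘ₗ (LinearMap.rTensor H (LinearMap.rTensor H (Coalgebra.comul (R := R) (A := H))))
    -- (Δ ⊗ id) : H ⊗ H → (H ⊗ H) ⊗ H
    ∘ₗ (LinearMap.rTensor H (Coalgebra.comul (R := R) (A := H)))

open Coalgebra HopfAlgebra

namespace HopfAlgebra

variable {k : Type*} [CommSemiring k] {A : Type*} [Semiring A] [HopfAlgebra k A]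

variable (k) in
def adjointAction (x y : A) : A :=
  LinearMap.mul' k A (TensorProduct.map (LinearMap.mulRight k y) (antipode k) (comul x))

lemma adjointAction_eq_sum {ι : Type*} {x : A} (y : A) (r : Repr k x ι) :
    adjointAction k x y = ∑ i ∈ r.index, r.left i * y * antipode k (r.right i) := by
  simp [adjointAction, ← r.eq, map_sum]

lemma sum_smul_counit {ι : Type*} {x : A} (r : Repr k x ι) :
    ∑ i ∈ r.index, counit (R := k) (r.right i) • r.left i = x := by
  simpa only [map_sum, TensorProduct.lift.tmul, LinearMap.flip_apply, LinearMap.lsmul_apply,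
    one_smul] using congr(TensorProduct.lift (LinearMap.lsmul k A).flip $(sum_tmul_counit_eq r))

lemma mul_eq_sum_adjointAction_mul {ι : Type*} {x : A} (y : A) (r : Repr k x ι) :
    x * y = ∑ i ∈ r.index, adjointAction k (r.left i) y * r.right i := by
  let u i := ℛ k (r.left i)
  let w i := ℛ k (r.right i)
  have coassoc := congr(LinearMap.mul' k A (TensorProduct.map (LinearMap.mulRight k y)
      (LinearMap.mul' k A ∘ₗ TensorProduct.map (antipode k) LinearMap.id)
      $(sum_tmul_tmul_eq r u w)))
  simp only [map_sum, TensorProduct.map_tmul, LinearMap.mul'_apply, LinearMap.mulRight_apply,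
    LinearMap.comp_apply, LinearMap.id_apply] at coassoc
  calc x * y = ∑ i ∈ r.index, counit (R := k) (r.right i) • r.left i * y := by
        rw [← Finset.sum_mul, sum_smul_counit]
    _ = ∑ i ∈ r.index, r.left i * y * ∑ j ∈ (w i).index,
          antipode k ((w i).left j) * (w i).right j := by
        simp only [sum_antipode_mul_eq_smul, mul_smul_comm, mul_one, smul_mul_assoc]
    _ = ∑ i ∈ r.index, ∑ j ∈ (u i).index,
          (u i).left j * y * (antipode k ((u i).right j) * r.right i) := by
        simp only [Finset.mul_sum, coassoc]
    _ = _ := by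
        simp only [adjointAction_eq_sum y (u _), Finset.sum_mul, mul_assoc]

theorem mul_comm_of_adjointAction_eq_counit_smul
    (had : ∀ x y : A, adjointAction k x y = counit (R := k) x • y) (x y : A) :
    x * y = y * x := by
  rw [mul_eq_sum_adjointAction_mul y (ℛ k x)]
  simp only [had, smul_mul_assoc, ← mul_smul_comm, ← Finset.mul_sum, sum_counit_smul]

end HopfAlgebra

section

variable {R H}

lemma conjPhi_tmul {ι : Type*} {κ : ι → Type*} {x : H} (y : H) (r : Repr R x ι)
    (u : ∀ i, Repr R (r.left i) (κ i)) :
    conjPhi R H (x ⊗ₜ y) = ∑ i ∈ r.index, ∑ j ∈ (u i).index,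
      (u i).left j ⊗ₜ ((u i).right j * y * antipode R (r.right i)) := by
  simp only [conjPhi, LinearMap.comp_apply, LinearMap.rTensor_tmul, ← r.eq, ← (u _).eq,
    sum_tmul, map_sum, LinearMap.lTensor_tmul, LinearEquiv.coe_coe, assoc_tmul,
    assoc_symm_tmul, comm_tmul, LinearMap.mul'_apply]

lemma adjointAction_eq_counit_smul_of_conjPhi_eq_id (hΦ : conjPhi R H = LinearMap.id)
    (x y : H) : adjointAction R x y = counit (R := R) x • y := by
  let r := ℛ R x
  have h := congr(TensorProduct.lift (LinearMap.lsmul R H ∘ₗ counit)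
    $(conjPhi_tmul y r fun i => ℛ R (r.left i)))
  simp only [hΦ, LinearMap.id_apply, map_sum, TensorProduct.lift.tmul, LinearMap.comp_apply,
    LinearMap.lsmul_apply, ← smul_mul_assoc, ← Finset.sum_mul, sum_counit_smul] at h
  rw [adjointAction_eq_sum y r, h]

end

theorem stmt17
    (hΦ : conjPhi R H = LinearMap.id) :
    ∀ x y : H, x * y = y * x :=
  mul_comm_of_adjointAction_eq_counit_smul (adjointAction_eq_counit_smul_of_conjPhi_eq_id hΦ)
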